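/- As identities of End(V)[ℓ]-valued doubly infinite formal series in z: (i) D_z x^i(z) = α^i(z) for each i ∈ {1,2,3}; and (ii) D_z x*_i(z) = β_i(z) + ½ Σ_{j,k} ε_{ijk} x^j(z) · D_z x^k(z) for each i ∈ {1,2,3}. -/

import Mathlib

open Finset

/-- Levi-Civita symbol on `{1,2,3}` (indexed by `Fin 3`). -/
def eps (i j k : Fin 3) : ℤ :=
  (((j : ℤ) - (i : ℤ)) * ((k : ℤ) - (i : ℤ)) * ((k : ℤ) - (j : ℤ))) / 2

variable {V : Type*} [AddCommGroup V] [Module ℂ V]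

/-- `x^i_n`: equals the given `x^i_0` for `n = 0`, and `−(1/n) α^i_n` for `n ≠ 0`. -/
noncomputable def xop (α : Fin 3 → ℤ → Module.End ℂ V) (x0 : Fin 3 → Module.End ℂ V)
    (i : Fin 3) (n : ℤ) : Module.End ℂ V :=
  if n = 0 then x0 i else (-(n : ℂ)⁻¹) • α i n

/-- `P_i = β_{i,0} + Σ_{j,k} ε_{ijk} x^j_0 W^k − ½ Σ_{j,k} ε_{ijk} Σ_{m∈ℤ} m x^j_{−m} x^k_m`,
defined pointwise on vectors (the inner sum has finitely many nonzero terms on each vector). -/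
noncomputable def Pop (α β : Fin 3 → ℤ → Module.End ℂ V) (x0 : Fin 3 → Module.End ℂ V)
    (i : Fin 3) : V → V := fun v =>
  β i 0 v + (∑ j : Fin 3, ∑ k : Fin 3, eps i j k • (x0 j) ((α k 0) v))
    - (2 : ℂ)⁻¹ • ∑ j : Fin 3, ∑ k : Fin 3, eps i j k •
        ∑ᶠ m : ℤ, (m : ℂ) • (xop α x0 j (-m)) ((xop α x0 k m) v)

/-- `x*_{i,n} = −(1/n)(β_{i,n} + Σ_{j,k} ε_{ijk} x^j_n W^k − ½ Σ_{j,k} ε_{ijk} Σ_m m x^j_{n−m} x^k_m)`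
for `n ≠ 0`, defined pointwise on vectors. -/
noncomputable def xstarop (α β : Fin 3 → ℤ → Module.End ℂ V) (x0 : Fin 3 → Module.End ℂ V)
    (i : Fin 3) (n : ℤ) : V → V := fun v =>
  (-(n : ℂ)⁻¹) • (β i n v + (∑ j : Fin 3, ∑ k : Fin 3, eps i j k • (xop α x0 j n) ((α k 0) v))
    - (2 : ℂ)⁻¹ • ∑ j : Fin 3, ∑ k : Fin 3, eps i j k •
        ∑ᶠ m : ℤ, (m : ℂ) • (xop α x0 j (n - m)) ((xop α x0 k m) v))

variable (V) in
/-- A doubly infinite formal series in `z` with coefficients that are polynomials in `ℓ`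
with `End(V)`-valued coefficients, recorded pointwise: the value at `(m, j, v)` is the
coefficient of `z^{−m} ℓ^j` applied to `v`. -/
abbrev FormalSeries : Type _ := ℤ → ℕ → V → V

/-- The derivation `D_z = ∂_z + z^{−1} ∂_ℓ`, acting coefficientwise. -/
noncomputable def DzS (S : FormalSeries V) : FormalSeries V := fun m j v =>
  ((j : ℂ) + 1) • S (m - 1) (j + 1) v - ((m : ℂ) - 1) • S (m - 1) j v

/-- The coefficientwise product of two such series (each coefficient of the product,
applied to a fixed vector, is a finite sum, computed here by `finsum`). -/
noncomputable def mulS (S T : FormalSeries V) : FormalSeries V := fun m j v =>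
  ∑ j1 ∈ Finset.range (j + 1), ∑ᶠ m1 : ℤ, S m1 j1 (T (m - m1) (j - j1) v)

/-- The series `α^i(z) = Σ_n α^i_n z^{−1−n}`. -/
noncomputable def alphaS (α : Fin 3 → ℤ → Module.End ℂ V) (i : Fin 3) : FormalSeries V :=
  fun m j v => if j = 0 then α i (m - 1) v else 0

/-- The series `β_i(z) = Σ_n β_{i,n} z^{−1−n}`. -/
noncomputable def betaS (β : Fin 3 → ℤ → Module.End ℂ V) (i : Fin 3) : FormalSeries V :=
  fun m j v => if j = 0 then β i (m - 1) v else 0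

/-- The logarithmic series `x^i(z) = W^i ℓ + Σ_n x^i_n z^{−n}`. -/
noncomputable def xS (α : Fin 3 → ℤ → Module.End ℂ V) (x0 : Fin 3 → Module.End ℂ V)
    (i : Fin 3) : FormalSeries V := fun m j v =>
  if j = 0 then (xop α x0 i m) v else if j = 1 ∧ m = 0 then (α i 0) v else 0

/-- The logarithmic series
`x*_i(z) = P_i ℓ + Σ_n x*_{i,n} z^{−n} + (ℓ/2) Σ_{j,k} ε_{ijk} W^j x^k(z)`. -/
noncomputable def xstarS (α β : Fin 3 → ℤ → Module.End ℂ V)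
    (x0 xstar0 : Fin 3 → Module.End ℂ V) (i : Fin 3) : FormalSeries V := fun m j v =>
  (if j = 0 then (if m = 0 then xstar0 i v else xstarop α β x0 i m v) else 0)
  + (if j = 1 ∧ m = 0 then Pop α β x0 i v else 0)
  + (if 1 ≤ j then (2 : ℂ)⁻¹ • ∑ j' : Fin 3, ∑ k : Fin 3,
        eps i j' k • (α j' 0) (xS α x0 k m (j - 1) v) else 0)

/-! The identities are checked coefficient by coefficient in `z^{-n-1} ℓ^j`. Part (i) holds
because `x^i_n = -α^i_n / n` for `n ≠ 0` while `D_z (W^i ℓ) = α^i_0 z^{-1}`. For the `ℓ^0`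
coefficient of part (ii), the convolution `Σ_m x^j_m α^k_{n-m}` splits, via
`α^k_{n-m} = -(n-m) x^k_{n-m}`, into `x^j_n W^k` minus the quadratic sum that defines `x*_{i,n}`
(or `P_i`); what is left over, `Σ ε_{ijk} (x^j_n W^k + W^j x^k_n)`, vanishes because `W^j`
commutes with `x^k_n` and `ε` is antisymmetric. The `ℓ^1` coefficients reduce in the same way to
`ε`-contractions of commuting operators, and higher powers of `ℓ` do not occur. On each vector
the convolution is a finite sum by (R4) and the commutativity of the `α`s. -/

theorem sum_eps_smul_swap {M : Type*} [AddCommGroup M] (f : Fin 3 → Fin 3 → M) (i : Fin 3) :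
    ∑ j : Fin 3, ∑ k : Fin 3, eps i j k • f j k = -∑ j : Fin 3, ∑ k : Fin 3, eps i j k • f k j := by
  fin_cases i <;> simp [Fin.sum_univ_three, eps]

theorem sum_eps_smul_eq_zero_of_symm {M : Type*} [AddCommGroup M] {f : Fin 3 → Fin 3 → M}
    (hf : ∀ j k, f j k = f k j) (i : Fin 3) : ∑ j : Fin 3, ∑ k : Fin 3, eps i j k • f j k = 0 := by
  fin_cases i <;> simp [Fin.sum_univ_three, eps, hf 1 0, hf 2 0, hf 2 1]

theorem Commute.apply_apply {R M : Type*} [Semiring R] [AddCommMonoid M] [Module R M]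
    {a b : Module.End R M} (h : Commute a b) (v : M) : a (b v) = b (a v) :=
  LinearMap.congr_fun h.eq v

section

variable {α β : Fin 3 → ℤ → Module.End ℂ V} {x0 xstar0 : Fin 3 → Module.End ℂ V}

theorem xop_zero (i : Fin 3) : xop α x0 i 0 = x0 i := if_pos rfl

theorem xop_of_ne_zero (i : Fin 3) {n : ℤ} (hn : n ≠ 0) : xop α x0 i n = -(n : ℂ)⁻¹ • α i n :=
  if_neg hn

theorem intCast_smul_xop (i : Fin 3) {n : ℤ} (hn : n ≠ 0) : (n : ℂ) • xop α x0 i n = -α i n := by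
  rw [xop_of_ne_zero i hn, smul_smul, mul_neg, mul_inv_cancel₀ (Int.cast_ne_zero.mpr hn),
    neg_one_smul]

theorem commute_alpha_xop (hαα : ∀ i j m n, Commute (α i m) (α j n))
    (hαx : ∀ i j n, Commute (α j n) (x0 i)) (j k : Fin 3) (p q : ℤ) :
    Commute (α j p) (xop α x0 k q) := by
  by_cases hq : q = 0
  · rw [hq, xop_zero]; exact hαx k j p
  · rw [xop_of_ne_zero k hq]; exact (hαα j k p q).smul_right _

theorem DzS_apply_add_one (S : FormalSeries V) (n : ℤ) (j : ℕ) (v : V) :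
    DzS S (n + 1) j v = ((j : ℂ) + 1) • S n (j + 1) v - (n : ℂ) • S n j v := by
  simp [DzS]

theorem xS_apply_zero (i : Fin 3) (n : ℤ) (v : V) : xS α x0 i n 0 v = xop α x0 i n v := rfl

theorem xS_apply_one (i : Fin 3) (n : ℤ) (v : V) :
    xS α x0 i n 1 v = if n = 0 then α i 0 v else 0 := by
  simp [xS]

theorem xS_apply_add_two (i : Fin 3) (n : ℤ) (j : ℕ) (v : V) : xS α x0 i n (j + 2) v = 0 := by
  simp [xS]

theorem DzS_xS (i : Fin 3) : DzS (xS α x0 i) = alphaS α i := by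
  funext m j v
  obtain ⟨n, rfl⟩ : ∃ n, m = n + 1 := ⟨m - 1, by ring⟩
  rw [DzS_apply_add_one]
  rcases j with _ | _ | j
  · by_cases hn : n = 0
    · simp [alphaS, xS_apply_one, hn]
    · simp [alphaS, xS_apply_one, hn, xS_apply_zero, ← LinearMap.smul_apply, intCast_smul_xop]
  · by_cases hn : n = 0 <;> simp [alphaS, xS_apply_one, xS_apply_add_two, hn]
  · simp [alphaS, xS_apply_add_two]

theorem mulS_xS_alphaS (j' k : Fin 3) (n : ℤ) (j : ℕ) (v : V) :
    mulS (xS α x0 j') (alphaS α k) (n + 1) j v = ∑ᶠ m : ℤ, xS α x0 j' m j (α k (n - m) v) := by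
  rw [mulS, Finset.sum_eq_single_of_mem j (Finset.self_mem_range_succ j)]
  · simp only [alphaS, tsub_self, if_true, show ∀ m : ℤ, n + 1 - m - 1 = n - m by omega]
  · intro j1 hj1 hne
    have : j - j1 ≠ 0 := by rw [Finset.mem_range] at hj1; omega
    simp [alphaS, xS, this]

theorem betaS_apply_add_one (i : Fin 3) (n : ℤ) (j : ℕ) (v : V) :
    betaS β i (n + 1) j v = if j = 0 then β i n v else 0 := by
  simp [betaS]

theorem xstarS_apply_zero (i : Fin 3) (n : ℤ) (v : V) :
    xstarS α β x0 xstar0 i n 0 v = if n = 0 then xstar0 i v else xstarop α β x0 i n v := by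
  simp [xstarS]

theorem xstarS_apply_one (i : Fin 3) (n : ℤ) (v : V) :
    xstarS α β x0 xstar0 i n 1 v = (if n = 0 then Pop α β x0 i v else 0)
      + (2 : ℂ)⁻¹ • ∑ j : Fin 3, ∑ k : Fin 3, eps i j k • α j 0 (xop α x0 k n v) := by
  simp [xstarS, xS]

theorem xstarS_apply_add_two (i : Fin 3) (n : ℤ) (j : ℕ) (v : V) :
    xstarS α β x0 xstar0 i n (j + 2) v
      = (2 : ℂ)⁻¹ • ∑ j' : Fin 3, ∑ k : Fin 3, eps i j' k • α j' 0 (xS α x0 k n (j + 1) v) := by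
  simp [xstarS]

theorem hasFiniteSupport_xop_apply_alpha (hαα : ∀ i j m n, Commute (α i m) (α j n)) {N : ℤ}
    {v : V} (hN : ∀ i q, N ≤ q → α i q v = 0) (j k : Fin 3) (n : ℤ) :
    (fun m => xop α x0 j m (α k (n - m) v)).HasFiniteSupport := by
  refine (Set.finite_Icc (n - N) (max N 1)).subset (Function.support_subset_iff'.mpr fun m hm => ?_)
  rw [Set.mem_Icc, not_and_or, not_le, not_le] at hm
  rcases hm with hm | hm
  · rw [hN k (n - m) (by omega), map_zero]
  · rw [xop_of_ne_zero j (by omega), LinearMap.smul_apply, (hαα j k m (n - m)).apply_apply,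
      hN j m (by omega), map_zero, smul_zero]

theorem finsum_xop_apply_alpha (hαα : ∀ i j m n, Commute (α i m) (α j n)) {N : ℤ}
    {v : V} (hN : ∀ i q, N ≤ q → α i q v = 0) (j k : Fin 3) (n : ℤ) :
    ∑ᶠ m : ℤ, xop α x0 j m (α k (n - m) v)
      = xop α x0 j n (α k 0 v) - ∑ᶠ m : ℤ, (m : ℂ) • xop α x0 j (n - m) (xop α x0 k m v) := by
  set f : ℤ → V := fun m => xop α x0 j m (α k (n - m) v)
  set g : ℤ → V := fun m => if m = n then f n else 0
  have hf : f.HasFiniteSupport := hasFiniteSupport_xop_apply_alpha hαα hN j k n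
  have hg : g.HasFiniteSupport :=
    (Set.finite_singleton n).subset (Function.support_subset_iff'.mpr fun m hm => if_neg hm)
  have hterm (m : ℤ) : ((n - m : ℤ) : ℂ) • xop α x0 j m (xop α x0 k (n - m) v) = g m - f m := by
    by_cases hm : m = n
    · simp [g, hm]
    · rw [← map_smul, ← LinearMap.smul_apply, intCast_smul_xop k (sub_ne_zero.mpr (Ne.symm hm))]
      simp [g, f, hm]
  calc ∑ᶠ m, f m = ∑ᶠ m, g m - ∑ᶠ m, (g m - f m) := by rw [finsum_sub_distrib hg hf]; abel
    _ = f n - ∑ᶠ m, ((n - m : ℤ) : ℂ) • xop α x0 j m (xop α x0 k (n - m) v) := by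
      rw [finsum_eq_single g n fun m hm => if_neg hm, finsum_congr hterm,
        show g n = f n from if_pos rfl]
    _ = _ := by
      rw [← finsum_comp_equiv (Equiv.subLeft n)]
      simp [f]

theorem DzS_xstarS_apply_zero (hαα : ∀ i j m n, Commute (α i m) (α j n))
    (hαx : ∀ i j n, Commute (α j n) (x0 i)) {N : ℤ} {v : V} (hN : ∀ i q, N ≤ q → α i q v = 0)
    (i : Fin 3) (m : ℤ) :
    DzS (xstarS α β x0 xstar0 i) m 0 v = betaS β i m 0 v + (2 : ℂ)⁻¹ •
      ∑ j : Fin 3, ∑ k : Fin 3, eps i j k • mulS (xS α x0 j) (alphaS α k) m 0 v := by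
  obtain ⟨n, rfl⟩ : ∃ n, m = n + 1 := ⟨m - 1, by ring⟩
  have hLHS : DzS (xstarS α β x0 xstar0 i) (n + 1) 0 v
      = (if n = 0 then Pop α β x0 i v else -(n : ℂ) • xstarop α β x0 i n v)
        + (2 : ℂ)⁻¹ • ∑ j : Fin 3, ∑ k : Fin 3, eps i j k • α j 0 (xop α x0 k n v) := by
    rw [DzS_apply_add_one, xstarS_apply_one, xstarS_apply_zero]
    split_ifs with hn
    · simp [hn]
    · module
  have hPx : (if n = 0 then Pop α β x0 i v else -(n : ℂ) • xstarop α β x0 i n v)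
      = β i n v + ∑ j : Fin 3, ∑ k : Fin 3, eps i j k • xop α x0 j n (α k 0 v)
        - (2 : ℂ)⁻¹ • ∑ j : Fin 3, ∑ k : Fin 3, eps i j k •
          ∑ᶠ m : ℤ, (m : ℂ) • xop α x0 j (n - m) (xop α x0 k m v) := by
    split_ifs with hn
    · simp [Pop, hn, xop_zero]
    · simp [xstarop, smul_smul, hn]
  have hWx : ∑ j : Fin 3, ∑ k : Fin 3, eps i j k • α j 0 (xop α x0 k n v)
      = -∑ j : Fin 3, ∑ k : Fin 3, eps i j k • xop α x0 j n (α k 0 v) := by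
    rw [sum_eps_smul_swap]
    simp only [(commute_alpha_xop hαα hαx _ _ _ _).apply_apply]
  simp only [hLHS, hPx, hWx, betaS_apply_add_one, mulS_xS_alphaS, xS_apply_zero,
    finsum_xop_apply_alpha hαα hN, smul_sub, Finset.sum_sub_distrib, if_true]
  module

theorem DzS_xstarS_apply_one (hαα : ∀ i j m n, Commute (α i m) (α j n)) (i : Fin 3) (m : ℤ)
    (v : V) :
    DzS (xstarS α β x0 xstar0 i) m 1 v = betaS β i m 1 v + (2 : ℂ)⁻¹ •
      ∑ j : Fin 3, ∑ k : Fin 3, eps i j k • mulS (xS α x0 j) (alphaS α k) m 1 v := by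
  obtain ⟨n, rfl⟩ : ∃ n, m = n + 1 := ⟨m - 1, by ring⟩
  have hmul (j k : Fin 3) : mulS (xS α x0 j) (alphaS α k) (n + 1) 1 v = α j 0 (α k n v) := by
    rw [mulS_xS_alphaS, finsum_eq_single _ 0 fun m hm => by simp [xS_apply_one, hm]]
    simp [xS_apply_one]
  simp only [DzS_apply_add_one, xstarS_apply_add_two, xstarS_apply_one, zero_add, xS_apply_one,
    betaS_apply_add_one, hmul, one_ne_zero, if_false]
  by_cases hn : n = 0
  · have hWW := sum_eps_smul_eq_zero_of_symm (f := fun j k => α j 0 (α k 0 v))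
      (fun j k => (hαα j k 0 0).apply_apply v) i
    simp only [hn, if_true, Int.cast_zero, zero_smul, sub_zero, hWW, smul_zero]
  · have hx : (n : ℂ) • ∑ j : Fin 3, ∑ k : Fin 3, eps i j k • α j 0 (xop α x0 k n v)
        = -∑ j : Fin 3, ∑ k : Fin 3, eps i j k • α j 0 (α k n v) := by
      simp only [Finset.smul_sum, ← Finset.sum_neg_distrib]
      refine Finset.sum_congr rfl fun j _ => Finset.sum_congr rfl fun k _ => ?_
      rw [smul_comm, ← smul_neg]
      congr 1
      rw [← map_smul, ← LinearMap.smul_apply, intCast_smul_xop k hn, LinearMap.neg_apply, map_neg]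
    simp only [hn, if_false, map_zero, smul_zero, Finset.sum_const_zero, zero_add, zero_sub]
    rw [smul_comm (n : ℂ) (2⁻¹ : ℂ), hx, smul_neg, neg_neg]

theorem DzS_xstarS_apply_add_two (i : Fin 3) (m : ℤ) (j : ℕ) (v : V) :
    DzS (xstarS α β x0 xstar0 i) m (j + 2) v = betaS β i m (j + 2) v + (2 : ℂ)⁻¹ •
      ∑ j' : Fin 3, ∑ k : Fin 3, eps i j' k • mulS (xS α x0 j') (alphaS α k) m (j + 2) v := by
  obtain ⟨n, rfl⟩ : ∃ n, m = n + 1 := ⟨m - 1, by ring⟩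
  have hlog : (n : ℂ) • xstarS α β x0 xstar0 i n (j + 2) v = 0 := by
    rcases j with _ | j
    · by_cases hn : n = 0 <;> simp [xstarS_apply_add_two, xS_apply_one, hn]
    · simp [xstarS_apply_add_two, xS_apply_add_two]
  rw [DzS_apply_add_one, hlog, show j + 2 + 1 = (j + 1) + 2 by ring]
  simp [xstarS_apply_add_two, xS_apply_add_two, mulS_xS_alphaS, betaS_apply_add_one]

end

theorem Dz_x_and_xstar_general
    (α β : Fin 3 → ℤ → Module.End ℂ V) (x0 xstar0 : Fin 3 → Module.End ℂ V)
    (R1 : ∀ (i j : Fin 3) (m n : ℤ), ⁅α i m, α j n⁆ = 0)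
    (R4 : ∀ v : V, ∃ N : ℤ, ∀ (i : Fin 3) (n : ℤ), N ≤ n → α i n v = 0 ∧ β i n v = 0)
    (R5a : ∀ (i j : Fin 3) (n : ℤ), ⁅α j n, x0 i⁆ = 0) :
    (∀ (i : Fin 3), DzS (xS α x0 i) = alphaS α i) ∧
    (∀ (i : Fin 3) (m : ℤ) (j : ℕ) (v : V),
      DzS (xstarS α β x0 xstar0 i) m j v
        = betaS β i m j v + (2 : ℂ)⁻¹ • ∑ j' : Fin 3, ∑ k : Fin 3,
            eps i j' k • mulS (xS α x0 j') (DzS (xS α x0 k)) m j v) := by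
  have hαα : ∀ i j m n, Commute (α i m) (α j n) := fun i j m n =>
    commute_iff_lie_eq.mpr (R1 i j m n)
  have hαx : ∀ i j n, Commute (α j n) (x0 i) := fun i j n => commute_iff_lie_eq.mpr (R5a i j n)
  refine ⟨DzS_xS, fun i m j v => ?_⟩
  simp only [DzS_xS]
  rcases j with _ | _ | j
  · obtain ⟨N, hN⟩ := R4 v
    exact DzS_xstarS_apply_zero hαα hαx (fun i q hq => (hN i q hq).1) i m
  · exact DzS_xstarS_apply_one hαα i m v
  · exact DzS_xstarS_apply_add_two i m j v

/-- As identities of coefficientwise formal series: (i) `D_z x^i(z) = α^i(z)`;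
(ii) `D_z x*_i(z) = β_i(z) + ½ Σ_{j,k} ε_{ijk} x^j(z) · D_z x^k(z)`. -/
theorem Dz_x_and_xstar
    (α β : Fin 3 → ℤ → Module.End ℂ V) (x0 xstar0 : Fin 3 → Module.End ℂ V)
    (R1 : ∀ (i j : Fin 3) (m n : ℤ), ⁅α i m, α j n⁆ = 0)
    (R2 : ∀ (i j : Fin 3) (m n : ℤ), ⁅β i m, α j n⁆
      = if i = j ∧ m + n = 0 then (m : ℂ) • (1 : Module.End ℂ V) else 0)
    (R3 : ∀ (i j : Fin 3) (m n : ℤ), ⁅β i m, β j n⁆ = ∑ k : Fin 3, eps i j k • α k (m + n))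
    (R4 : ∀ v : V, ∃ N : ℤ, ∀ (i : Fin 3) (n : ℤ), N ≤ n → α i n v = 0 ∧ β i n v = 0)
    (R5a : ∀ (i j : Fin 3) (n : ℤ), ⁅α j n, x0 i⁆ = 0)
    (R5b : ∀ i j : Fin 3, ⁅x0 i, x0 j⁆ = 0)
    (R6 : ∀ (i j : Fin 3) (n : ℤ), ⁅β j n, x0 i⁆
      = if i = j ∧ n = 0 then (1 : Module.End ℂ V) else 0)
    (R7 : ∀ (i j : Fin 3) (n : ℤ), ⁅xstar0 i, xop α x0 j n⁆ = 0)
    (R8 : ∀ i j : Fin 3, ⁅xstar0 i, xstar0 j⁆ = 0)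
    (R9 : ∀ (i j : Fin 3) (n : ℤ), ⁅xstar0 i, β j n⁆
      = (2 : ℂ)⁻¹ • ∑ k : Fin 3, eps i j k • xop α x0 k n)
    (R10 : ∀ (i j : Fin 3) (m : ℤ), ⁅α j m, xstar0 i⁆
      = if i = j ∧ m = 0 then (1 : Module.End ℂ V) else 0) :
    (∀ (i : Fin 3), DzS (xS α x0 i) = alphaS α i) ∧
    (∀ (i : Fin 3) (m : ℤ) (j : ℕ) (v : V),
      DzS (xstarS α β x0 xstar0 i) m j v
        = betaS β i m j v + (2 : ℂ)⁻¹ • ∑ j' : Fin 3, ∑ k : Fin 3,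
            eps i j' k • mulS (xS α x0 j') (DzS (xS α x0 k)) m j v) :=
  Dz_x_and_xstar_general α β x0 xstar0 R1 R4 R5a
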